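/- arXiv:1405.6574 — 3 statements merged into one kernel-verified Lean document; each statement's English description precedes it below -/
import Mathlib

section
/- Let m ≥ 1 and let ω : ℤ^m × ℤ^m → 𝕋 be a 2-cocycle with respect to the trivial action, i.e. ω(x,y)·ω(x+y,z) = ω(y,z)·ω(x,y+z) for all x,y,z ∈ ℤ^m. Then there exist a bicharacter b : ℤ^m × ℤ^m → 𝕋 with b(x,x) = 1 for all x, and a function e : ℤ^m → 𝕋, such that ω(x,y) = b(x,y)·e(x)·e(y)·e(x+y)^{−1} for all x,y ∈ ℤ^m. In other words, every 𝕋-valued 2-cocycle on ℤ^m is cohomologous to a skew-symmetric bicharacter. -/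
/-!
The commutator `ω x y / ω y x` of a 2-cocycle on an abelian group is an alternating
bicharacter `β`. On `ℤ^m`, where `𝕋` has square roots, `β = b / b.flip` for an alternating
bicharacter `b` obtained by taking square roots of `β` on basis pairs `(eᵢ, eⱼ)` with `i < j`.
Bicharacters are cocycles, so `ω / b` is a symmetric cocycle. A symmetric cocycle defines an
abelian extension of `ℤ^m` by `𝕋`, which splits because `ℤ^m` is free abelian; a splitting
exhibits `ω / b` as a coboundary.
-/

variable {A G : Type*} [AddCommGroup A] [CommGroup G]

structure IsBichar (b : A → A → G) : Prop where
  map_add_left : ∀ x x' y, b (x + x') y = b x y * b x' y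
  map_add_right : ∀ x y y', b x (y + y') = b x y * b x y'

def IsCocycle (ω : A → A → G) : Prop :=
  ∀ x y z, ω x y * ω (x + y) z = ω y z * ω x (y + z)

namespace IsBichar

variable {b b' : A → A → G}

theorem flip (hb : IsBichar b) : IsBichar fun x y => b y x :=
  ⟨fun x x' y => hb.map_add_right y x x', fun x y y' => hb.map_add_left y y' x⟩

theorem div (hb : IsBichar b) (hb' : IsBichar b') : IsBichar fun x y => b x y / b' x y :=
  ⟨fun x x' y => by rw [hb.map_add_left, hb'.map_add_left, mul_div_mul_comm],
    fun x y y' => by rw [hb.map_add_right, hb'.map_add_right, mul_div_mul_comm]⟩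

theorem apply_swap (hb : IsBichar b) (halt : ∀ x, b x x = 1) (x y : A) :
    b y x = (b x y)⁻¹ := by
  have h := halt (x + y)
  rw [hb.map_add_left, hb.map_add_right, hb.map_add_right, halt, halt, one_mul, mul_one] at h
  exact eq_inv_of_mul_eq_one_right h

theorem isCocycle (hb : IsBichar b) : IsCocycle b := fun x y z => by
  rw [hb.map_add_left, hb.map_add_right]
  ac_rfl

end IsBichar

namespace IsCocycle

variable {ω ω' : A → A → G}

theorem div (hω : IsCocycle ω) (hω' : IsCocycle ω') : IsCocycle fun x y => ω x y / ω' x y :=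
  fun x y z => by rw [div_mul_div_comm, div_mul_div_comm, hω, hω']

theorem apply_zero_left (hω : IsCocycle ω) (y : A) : ω 0 y = ω 0 0 := by
  have h := hω 0 0 y
  rw [zero_add, zero_add, mul_comm] at h
  exact (mul_left_cancel h).symm

theorem isBichar_div_swap (hω : IsCocycle ω) : IsBichar fun x y => ω x y / ω y x := by
  have map_add_left : ∀ x x' y,
      ω (x + x') y / ω y (x + x') = ω x y / ω y x * (ω x' y / ω y x') := by
    intro x x' y
    have h₁ := hω x x' y
    have h₂ := hω x y x'
    have h₃ := hω y x x'
    rw [add_comm x' y] at h₁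
    rw [add_comm y x] at h₃
    apply_fun Additive.ofMul at h₁ h₂ h₃ ⊢
    simp only [ofMul_mul, ofMul_div] at h₁ h₂ h₃ ⊢
    linear_combination (norm := abel) h₁ - h₂ + h₃
  refine ⟨map_add_left, fun x y y' => ?_⟩
  rw [← inv_div, map_add_left, mul_inv, inv_div, inv_div]

end IsCocycle

@[ext]
structure CocycleExtension (ω : A → A → G) where
  coeff : G
  base : A

namespace CocycleExtension

variable {ω : A → A → G}

instance : Mul (CocycleExtension ω) :=
  ⟨fun a b => ⟨a.coeff * b.coeff * ω a.base b.base, a.base + b.base⟩⟩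

instance : One (CocycleExtension ω) := ⟨⟨(ω 0 0)⁻¹, 0⟩⟩

instance : Inv (CocycleExtension ω) :=
  ⟨fun a => ⟨(a.coeff * ω a.base (-a.base) * ω 0 0)⁻¹, -a.base⟩⟩

@[simp] theorem coeff_mul (a b : CocycleExtension ω) :
    (a * b).coeff = a.coeff * b.coeff * ω a.base b.base := rfl

@[simp] theorem base_mul (a b : CocycleExtension ω) : (a * b).base = a.base + b.base := rfl

abbrev commGroup (hω : IsCocycle ω) (hsymm : ∀ x y, ω x y = ω y x) :
    CommGroup (CocycleExtension ω) :=
  { Group.ofLeftAxioms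
      (fun a b c => by
        ext
        · calc _ = a.coeff * b.coeff * c.coeff *
                (ω a.base b.base * ω (a.base + b.base) c.base) := by
                simp only [coeff_mul, base_mul]; ac_rfl
            _ = _ := by rw [hω]; simp only [coeff_mul, base_mul]; ac_rfl
        · exact add_assoc _ _ _)
      (fun a => by
        ext
        · change (ω 0 0)⁻¹ * a.coeff * ω 0 a.base = a.coeff
          rw [hω.apply_zero_left a.base, mul_right_comm, inv_mul_cancel, one_mul]
        · exact zero_add _)
      (fun a => by
        ext
        · change (a.coeff * ω a.base (-a.base) * ω 0 0)⁻¹ * a.coeff * ω (-a.base) a.base =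
            (ω 0 0)⁻¹
          rw [hsymm (-a.base)]
          group
        · exact neg_add_cancel _) with
    mul_comm := fun a b => by
      ext
      · simp only [coeff_mul, hsymm a.base, mul_comm a.coeff]
      · exact add_comm _ _ }

end CocycleExtension

theorem IsCocycle.exists_eq_coboundary_of_symm [Module.Free ℤ A] {ω : A → A → G}
    (hω : IsCocycle ω) (hsymm : ∀ x y, ω x y = ω y x) :
    ∃ e : A → G, ∀ x y, ω x y = e x * e y * (e (x + y))⁻¹ := by
  let _ := CocycleExtension.commGroup hω hsymm
  -- a homomorphic section of the projection onto `A`, which exists since `A` is free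
  let B := Module.Free.chooseBasis ℤ A
  let s : A →ₗ[ℤ] Additive (CocycleExtension ω) := B.constr ℤ fun i => .ofMul ⟨1, B i⟩
  let p : Additive (CocycleExtension ω) →ₗ[ℤ] A :=
    (AddMonoidHom.mk' (fun a => a.toMul.base) fun _ _ => rfl).toIntLinearMap
  have hps : p ∘ₗ s = LinearMap.id := B.ext fun i => by simp [s, p]
  have hbase (x : A) : (s x).toMul.base = x := LinearMap.congr_fun hps x
  refine ⟨fun x => (s x).toMul.coeff⁻¹, fun x y => ?_⟩
  have h : (s (x + y)).toMul.coeff = (s x).toMul.coeff * (s y).toMul.coeff * ω x y := by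
    rw [map_add, toMul_add, CocycleExtension.coeff_mul, hbase, hbase]
  dsimp only
  rw [h, inv_inv, ← mul_inv, inv_mul_cancel_left]

namespace Module.Basis

variable {ι : Type*} (B : Basis ι ℤ A)

theorem ext_of_map_add {f g : A → G} (hf : ∀ x y, f (x + y) = f x * f y)
    (hg : ∀ x y, g (x + y) = g x * g y) (h : ∀ i, f (B i) = g (B i)) : f = g := by
  let F : A →ₗ[ℤ] Additive G := (AddMonoidHom.mk' (fun x => .ofMul (f x)) hf).toIntLinearMap
  let G' : A →ₗ[ℤ] Additive G := (AddMonoidHom.mk' (fun x => .ofMul (g x)) hg).toIntLinearMap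
  have hFG : F = G' := B.ext fun i => congrArg Additive.ofMul (h i)
  exact funext fun x => congrArg Additive.toMul (LinearMap.congr_fun hFG x)

theorem ext_isBichar {b b' : A → A → G} (hb : IsBichar b) (hb' : IsBichar b')
    (h : ∀ i j, b (B i) (B j) = b' (B i) (B j)) : b = b' := by
  refine B.ext_of_map_add (fun x x' => funext (hb.map_add_left x x'))
    (fun x x' => funext (hb'.map_add_left x x')) fun i => ?_
  exact B.ext_of_map_add (hb.map_add_right _) (hb'.map_add_right _) (h i)

variable [Fintype ι]

noncomputable def bichar (c : ι → ι → G) (x y : A) : G :=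
  ∏ i, ∏ j, c i j ^ (B.repr x i * B.repr y j)

theorem isBichar_bichar (c : ι → ι → G) : IsBichar (B.bichar c) where
  map_add_left x x' y := by
    simp only [bichar, map_add, Finsupp.add_apply, add_mul, zpow_add, Finset.prod_mul_distrib]
  map_add_right x y y' := by
    simp only [bichar, map_add, Finsupp.add_apply, mul_add, zpow_add, Finset.prod_mul_distrib]

theorem bichar_basis (c : ι → ι → G) (k l : ι) : B.bichar c (B k) (B l) = c k l := by
  classical
  simp [bichar, Finsupp.single_apply]

end Module.Basis

theorem IsBichar.exists_div_swap_eq {ι : Type*} [Fintype ι] [LinearOrder ι]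
    (B : Module.Basis ι ℤ A)
    (hG : ∀ g : G, IsSquare g) {β : A → A → G} (hβ : IsBichar β) (halt : ∀ x, β x x = 1) :
    ∃ b : A → A → G, IsBichar b ∧ (∀ x, b x x = 1) ∧ ∀ x y, b x y / b y x = β x y := by
  choose r hr using hG
  -- on basis pairs, `b₀ / b₀.flip` is a square root of `β`
  let b₀ := B.bichar fun i j => if i < j then r (β (B i) (B j)) else 1
  have hb₀ : IsBichar b₀ := B.isBichar_bichar _
  have hb : IsBichar fun x y => b₀ x y / b₀ y x := hb₀.div hb₀.flip
  refine ⟨_, hb, fun x => div_self' _,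
    congrFun₂ (B.ext_isBichar (hb.div hb.flip) hβ fun k l => ?_)⟩
  simp only [b₀, B.bichar_basis]
  rcases lt_trichotomy k l with hkl | rfl | hlk
  · simp [hkl, hkl.not_gt, ← hr]
  · simp [halt]
  · rw [hβ.apply_swap halt (B l) (B k)]
    simp only [hlk, hlk.not_gt, if_true, if_false]
    rw [one_div, div_one, div_eq_mul_inv, ← mul_inv, ← hr]

theorem Circle.isSquare (z : Circle) : IsSquare z :=
  ⟨Circle.exp (Complex.arg z / 2), by rw [← Circle.exp_add, add_halves, Circle.exp_arg]⟩

theorem stmt4_general (m : ℕ) (ω : (Fin m → ℤ) → (Fin m → ℤ) → Circle)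
    (hcoc : ∀ x y z, ω x y * ω (x + y) z = ω y z * ω x (y + z)) :
    ∃ (b : (Fin m → ℤ) → (Fin m → ℤ) → Circle) (e : (Fin m → ℤ) → Circle),
      (∀ x x' y, b (x + x') y = b x y * b x' y) ∧
      (∀ x y y', b x (y + y') = b x y * b x y') ∧
      (∀ x, b x x = 1) ∧
      (∀ x y, ω x y = b x y * e x * e y * (e (x + y))⁻¹) := by
  obtain ⟨b, hb, hb_self, hb_swap⟩ := (IsCocycle.isBichar_div_swap hcoc).exists_div_swap_eq
    (Pi.basisFun ℤ (Fin m)) Circle.isSquare fun x => div_self' _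
  have hsymm (x y) : ω x y / b x y = ω y x / b y x :=
    div_eq_div_iff_div_eq_div.2 (hb_swap x y).symm
  obtain ⟨e, he⟩ := (IsCocycle.div hcoc hb.isCocycle).exists_eq_coboundary_of_symm hsymm
  refine ⟨b, e, hb.map_add_left, hb.map_add_right, hb_self, fun x y => ?_⟩
  rw [mul_assoc, mul_assoc, ← mul_assoc (e x), ← he, mul_div_cancel]

/-- Every `𝕋`-valued 2-cocycle on `ℤ^m` (with trivial action) is cohomologous to a
skew-symmetric bicharacter. -/
theorem stmt4 (m : ℕ) (hm : 1 ≤ m) (ω : (Fin m → ℤ) → (Fin m → ℤ) → Circle)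
    (hcoc : ∀ x y z, ω x y * ω (x + y) z = ω y z * ω x (y + z)) :
    ∃ (b : (Fin m → ℤ) → (Fin m → ℤ) → Circle) (e : (Fin m → ℤ) → Circle),
      (∀ x x' y, b (x + x') y = b x y * b x' y) ∧
      (∀ x y y', b x (y + y') = b x y * b x y') ∧
      (∀ x, b x x = 1) ∧
      (∀ x y, ω x y = b x y * e x * e y * (e (x + y))⁻¹) :=
  stmt4_general m ω hcoc
end

section
/- Let n ≥ 3 be an odd integer and q > 0 a real number. Define ẽ^q_{n+i} = (−1)^i Σ_{(X′,X″)∈Ω_{n+i}} (−q)^{I_{n+i}(X′)} e_{X′} ⊗ e_{X″} in S ⊗ S, and put v_q = Σ_{i=1}^n q^i e_{{i}} ⊗ ẽ^q_{n+i} and w_q = Σ_{j=1}^n q^{−j} ẽ^q_{n+j} ⊗ e_{{j}} in S ⊗ S ⊗ S, equipped with the inner product making the vectors e_A ⊗ e_B ⊗ e_C orthonormal. Then (−1)^{(n+1)/2} · ⟨v_q, w_q⟩ > 0; in particular ⟨v_q, w_q⟩ ≠ 0. -/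
/-!
Both `v_q` and `w_q` are supported on basis vectors `e_A ⊗ e_B ⊗ e_C` with `A = {i}` resp.
`C = {j}`, and the coefficient of `ẽ_{n+j}` at `e_{i} ⊗ e_B` vanishes unless `i ≠ j` and
`B = {1,…,n} ∖ {i,j}`. Hence `⟨v_q, w_q⟩` is a sum over ordered pairs `i ≠ j` of a single
product of coefficients, equal to `(−1)^(i+j+I_{n+i}(B)+I_{n+j}({i}))` times a power of `q`.
Gauss's formula `Σ k = n(n+1)/2` shows that this sign exponent has the parity of `(n+1)/2` for
every pair, so all terms have the same sign and cannot cancel.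
-/

open scoped Classical ComplexOrder

noncomputable section

/-- Subsets of `{1,…,n}`, the index set for the basis of the spinor space `S`. -/
abbrev SIdx (n : ℕ) : Type := {X : Finset ℕ // X ∈ (Finset.Icc 1 n).powerset}

/-- `I₁(X) = Σ_{k∈X} k − |X|·n`. -/
def I1 (n : ℕ) (X : Finset ℕ) : ℤ := (∑ k ∈ X, (k : ℤ)) - X.card * n

/-- `I_{n+i}(X) = I₁(X) + |{k ∈ X : k < i}| − (n−1)`. -/
def Ihigh (n i : ℕ) (X : Finset ℕ) : ℤ :=
  I1 n X + ((X.filter (fun k => k < i)).card : ℤ) - ((n : ℤ) - 1)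

/-- The coefficient of `e_{X′} ⊗ e_{X″}` in
`ẽ^q_{n+i} = (−1)^i Σ_{(X′,X″)∈Ω_{n+i}} (−q)^{I_{n+i}(X′)} e_{X′} ⊗ e_{X″}`, where `Ω_{n+i}`
consists of pairs of disjoint sets with `X′ ∪ X″ = {1,…,n} ∖ {i}` and `|X′|` odd. -/
def tildeCoefQ (n : ℕ) (q : ℝ) (i : ℕ) (X' X'' : Finset ℕ) : ℂ :=
  if X' ∪ X'' = (Finset.Icc 1 n) \ {i} ∧ Disjoint X' X'' ∧ Odd X'.card then
    ((-1 : ℂ) ^ i) * ((-(q : ℂ)) ^ (Ihigh n i X'))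
  else 0

/-- `S ⊗ S ⊗ S` with the inner product making the `e_A ⊗ e_B ⊗ e_C` orthonormal. -/
abbrev T3 (n : ℕ) : Type := EuclideanSpace ℂ (SIdx n × SIdx n × SIdx n)

/-- `v_q = Σ_{i=1}^n q^i e_{{i}} ⊗ ẽ^q_{n+i}` in coordinates w.r.t. `e_A ⊗ e_B ⊗ e_C`. -/
def vVecQ (n : ℕ) (q : ℝ) : T3 n := WithLp.toLp 2 fun (p : SIdx n × SIdx n × SIdx n) =>
  ∑ i ∈ Finset.Icc 1 n,
    if (p.1 : Finset ℕ) = {i} then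
      ((q : ℂ) ^ i) * tildeCoefQ n q i (p.2.1 : Finset ℕ) (p.2.2 : Finset ℕ)
    else 0

/-- `w_q = Σ_{j=1}^n q^{−j} ẽ^q_{n+j} ⊗ e_{{j}}` in coordinates w.r.t. `e_A ⊗ e_B ⊗ e_C`. -/
def wVecQ (n : ℕ) (q : ℝ) : T3 n := WithLp.toLp 2 fun (p : SIdx n × SIdx n × SIdx n) =>
  ∑ j ∈ Finset.Icc 1 n,
    if (p.2.2 : Finset ℕ) = {j} then
      ((q : ℂ) ^ (-(j : ℤ))) * tildeCoefQ n q j (p.1 : Finset ℕ) (p.2.1 : Finset ℕ)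
    else 0

open Finset

lemma insert_eq_and_notMem_iff {α : Type*} [DecidableEq α] {a : α} {s t : Finset α} :
    insert a s = t ∧ a ∉ s ↔ a ∈ t ∧ s = t.erase a := by
  constructor
  · rintro ⟨rfl, ha⟩
    exact ⟨mem_insert_self a s, (erase_insert ha).symm⟩
  · rintro ⟨ha, rfl⟩
    exact ⟨insert_erase ha, notMem_erase a t⟩

lemma sum_Icc_id_mul_two (n : ℕ) : (∑ k ∈ Icc 1 n, (k : ℤ)) * 2 = n * (n + 1) := by
  induction n with
  | zero => simp
  | succ n ih =>
    rw [sum_Icc_succ_top (by omega), add_mul, ih]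
    push_cast
    ring

lemma neg_one_zpow_eq_pow_of_even_add {K : Type*} [DivisionRing K] {z : ℤ} {m : ℕ}
    (h : Even (z + m)) : (-1 : K) ^ z = (-1) ^ m := by
  rw [← zpow_natCast, neg_one_zpow_eq_ite, neg_one_zpow_eq_ite]
  exact if_congr (Int.even_add.1 h) rfl rfl

lemma pow_mul_neg_zpow_mul_zpow_mul_neg_zpow {K : Type*} [Field K] {x : K} (hx : x ≠ 0)
    (i j : ℕ) (a b : ℤ) :
    x ^ i * ((-1) ^ i * (-x) ^ a) * (x ^ (-(j : ℤ)) * ((-1) ^ j * (-x) ^ b)) =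
      (-1) ^ ((i : ℤ) + j + a + b) * x ^ ((i : ℤ) - j + a + b) := by
  have h1 : (-1 : K) ≠ 0 := neg_ne_zero.2 one_ne_zero
  rw [neg_eq_neg_one_mul x, mul_zpow, mul_zpow, zpow_add₀ h1, zpow_add₀ h1, zpow_add₀ h1,
    zpow_add₀ hx, zpow_add₀ hx, zpow_sub₀ hx]
  simp only [zpow_neg, zpow_natCast]
  ring

lemma sum_sIdx_ite_coe_eq {n : ℕ} {Z : Finset ℕ} (hZ : Z ⊆ Icc 1 n) (f : SIdx n → ℂ) :
    ∑ A : SIdx n, (if (A : Finset ℕ) = Z then f A else 0) = f ⟨Z, mem_powerset.2 hZ⟩ := by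
  rw [sum_eq_single_of_mem (⟨Z, mem_powerset.2 hZ⟩ : SIdx n) (mem_univ _)
    fun A _ hA => if_neg fun h => hA (Subtype.ext h)]
  exact if_pos rfl

def pairingTerm (n : ℕ) (q : ℝ) (i j : ℕ) : ℂ :=
  ∑ B : SIdx n, starRingEnd ℂ ((q : ℂ) ^ i * tildeCoefQ n q i B {j}) *
    ((q : ℂ) ^ (-(j : ℤ)) * tildeCoefQ n q j {i} B)

lemma inner_vVecQ_wVecQ (n : ℕ) (q : ℝ) :
    inner ℂ (vVecQ n q) (wVecQ n q) =
      ∑ i ∈ Icc 1 n, ∑ j ∈ Icc 1 n, pairingTerm n q i j := by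
  simp only [PiLp.inner_apply, RCLike.inner_apply', vVecQ, wVecQ, map_sum, sum_mul_sum]
  rw [Finset.sum_comm]
  refine sum_congr rfl fun i hi => ?_
  rw [Finset.sum_comm]
  refine sum_congr rfl fun j hj => ?_
  simp only [pairingTerm, Fintype.sum_prod_type, apply_ite (starRingEnd ℂ), map_zero, ite_mul,
    mul_ite, zero_mul, mul_zero, sum_sIdx_ite_coe_eq (singleton_subset_iff.2 hj), sum_ite_irrel,
    sum_const_zero, sum_sIdx_ite_coe_eq (singleton_subset_iff.2 hi)]

lemma tildeCoefQ_singleton_left {n i j : ℕ} (q : ℝ) (B : Finset ℕ) (hi : i ∈ Icc 1 n) :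
    tildeCoefQ n q j {i} B =
      if i ≠ j ∧ B = Icc 1 n \ {i, j} then (-1) ^ j * (-(q : ℂ)) ^ Ihigh n j {i} else 0 := by
  have hcond :
      {i} ∪ B = Icc 1 n \ {j} ∧ Disjoint {i} B ↔ i ≠ j ∧ B = Icc 1 n \ {i, j} := by
    rw [singleton_union, disjoint_singleton_left, insert_eq_and_notMem_iff, sdiff_insert]
    simp [hi]
  simp only [tildeCoefQ, card_singleton, odd_one, and_true, hcond]

lemma card_Icc_sdiff_pair {n i j : ℕ} (hi : i ∈ Icc 1 n) (hj : j ∈ Icc 1 n) (hij : i ≠ j) :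
    #(Icc 1 n \ {i, j}) = n - 2 := by
  rw [card_sdiff_of_subset (insert_subset hi (singleton_subset_iff.2 hj)), card_pair hij,
    Nat.card_Icc, Nat.add_sub_cancel]

lemma tildeCoefQ_sdiff_pair {n i j : ℕ} (q : ℝ) (hodd : Odd n) (hi : i ∈ Icc 1 n)
    (hj : j ∈ Icc 1 n) (hij : i ≠ j) :
    tildeCoefQ n q i (Icc 1 n \ {i, j}) {j} =
      (-1) ^ i * (-(q : ℂ)) ^ Ihigh n i (Icc 1 n \ {i, j}) := by
  obtain ⟨hi1, hin⟩ := mem_Icc.1 hi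
  obtain ⟨hj1, hjn⟩ := mem_Icc.1 hj
  have hunion : Icc 1 n \ {i, j} ∪ {j} = Icc 1 n \ {i} := by
    ext k
    simp only [mem_union, mem_sdiff, mem_insert, mem_singleton, mem_Icc]
    omega
  have hodd_card : Odd #(Icc 1 n \ {i, j}) := by
    rw [card_Icc_sdiff_pair hi hj hij]
    exact Nat.Odd.sub_even (by omega) hodd even_two
  rw [tildeCoefQ, if_pos ⟨hunion, by simp, hodd_card⟩]

lemma Ihigh_singleton (n i j : ℕ) :
    Ihigh n j {i} = i - n + (if i < j then 1 else 0) - (n - 1) := by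
  rw [Ihigh, I1, filter_singleton]
  split_ifs <;> simp

lemma card_filter_lt_sdiff_pair {n i j : ℕ} (hi : i ∈ Icc 1 n) (hj : j ∈ Icc 1 n) :
    #{k ∈ Icc 1 n \ {i, j} | k < i} = i - 1 - (if j < i then 1 else 0) := by
  obtain ⟨hi1, hin⟩ := mem_Icc.1 hi
  have hfilter : {k ∈ Icc 1 n \ {i, j} | k < i} = (Ico 1 i).erase j := by
    ext k
    simp only [mem_filter, mem_sdiff, mem_insert, mem_singleton, mem_Icc, mem_erase, mem_Ico]
    omega
  rw [hfilter]
  split_ifs with hji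
  · rw [card_erase_of_mem (mem_Ico.2 ⟨(mem_Icc.1 hj).1, hji⟩), Nat.card_Ico]
  · rw [erase_eq_of_notMem fun h => hji (mem_Ico.1 h).2, Nat.card_Ico, Nat.sub_zero]

lemma Ihigh_sdiff_pair {n i j : ℕ} (hi : i ∈ Icc 1 n) (hj : j ∈ Icc 1 n) (hij : i ≠ j) :
    Ihigh n i (Icc 1 n \ {i, j}) =
      (∑ k ∈ Icc 1 n, (k : ℤ)) - j - n * (n - 1) - (if j < i then 1 else 0) := by
  obtain ⟨hi1, hin⟩ := mem_Icc.1 hi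
  obtain ⟨hj1, hjn⟩ := mem_Icc.1 hj
  have hsub : {i, j} ⊆ Icc 1 n := insert_subset hi (singleton_subset_iff.2 hj)
  have hcard : (#(Icc 1 n \ {i, j}) : ℤ) = n - 2 := by
    rw [card_Icc_sdiff_pair hi hj hij]
    omega
  have hlt : (#{k ∈ Icc 1 n \ {i, j} | k < i} : ℤ) = i - 1 - (if j < i then 1 else 0) := by
    rw [card_filter_lt_sdiff_pair hi hj]
    split_ifs <;> omega
  rw [Ihigh, I1, sum_sdiff_eq_sub hsub, sum_pair hij, hcard, hlt]
  ring

lemma even_pairing_sign_exponent {n i j : ℕ} (hodd : Odd n) (hi : i ∈ Icc 1 n) (hj : j ∈ Icc 1 n)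
    (hij : i ≠ j) :
    Even ((i : ℤ) + j + Ihigh n i (Icc 1 n \ {i, j}) + Ihigh n j {i} + ((n + 1) / 2 : ℕ)) := by
  obtain ⟨m, rfl⟩ := hodd
  have hhalf : (2 * m + 1 + 1) / 2 = m + 1 := by omega
  have hsum : ∑ k ∈ Icc 1 (2 * m + 1), (k : ℤ) = (2 * m + 1) * (m + 1) := by
    have := sum_Icc_id_mul_two (2 * m + 1)
    push_cast at this
    linarith
  rw [Ihigh_sdiff_pair hi hj hij, Ihigh_singleton, hsum, hhalf]
  rcases lt_or_gt_of_ne hij with h | h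
  · rw [if_neg (by omega), if_pos h]
    exact ⟨i - m ^ 2 - m + 1, by push_cast; ring⟩
  · rw [if_pos h, if_neg (by omega)]
    exact ⟨i - m ^ 2 - m, by push_cast; ring⟩

lemma pairingTerm_self {n i : ℕ} (q : ℝ) (hi : i ∈ Icc 1 n) : pairingTerm n q i i = 0 := by
  simp [pairingTerm, tildeCoefQ_singleton_left _ _ hi]

lemma pairingTerm_eq {n i j : ℕ} {q : ℝ} (hq : q ≠ 0) (hodd : Odd n) (hi : i ∈ Icc 1 n)
    (hj : j ∈ Icc 1 n) (hij : i ≠ j) :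
    pairingTerm n q i j = (-1) ^ ((n + 1) / 2) *
      ((q ^ ((i : ℤ) - j + Ihigh n i (Icc 1 n \ {i, j}) + Ihigh n j {i}) : ℝ) : ℂ) := by
  simp only [pairingTerm, tildeCoefQ_singleton_left _ _ hi, ne_eq, hij, not_false_eq_true,
    true_and, mul_ite, mul_zero, sum_sIdx_ite_coe_eq sdiff_subset]
  rw [tildeCoefQ_sdiff_pair q hodd hi hj hij]
  simp only [map_mul, map_pow, map_zpow₀, map_neg, map_one, Complex.conj_ofReal]
  rw [pow_mul_neg_zpow_mul_zpow_mul_neg_zpow (Complex.ofReal_ne_zero.2 hq),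
    neg_one_zpow_eq_pow_of_even_add (even_pairing_sign_exponent hodd hi hj hij), Complex.ofReal_zpow]

/-- `(−1)^{(n+1)/2} ⟨v_q, w_q⟩ > 0`; in particular `⟨v_q, w_q⟩ ≠ 0` (the `q`-deformed
analogue of Proposition A.2). -/
theorem stmt8 (n : ℕ) (hn : 3 ≤ n) (hodd : Odd n) (q : ℝ) (hq : 0 < q) :
    0 < (-1 : ℂ) ^ ((n + 1) / 2) * (inner ℂ (vVecQ n q) (wVecQ n q) : ℂ) ∧
      (inner ℂ (vVecQ n q) (wVecQ n q) : ℂ) ≠ 0 := by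
  set s : ℂ := (-1) ^ ((n + 1) / 2)
  have hpos {i j : ℕ} (hi : i ∈ Icc 1 n) (hj : j ∈ Icc 1 n) (hij : i ≠ j) :
      0 < s * pairingTerm n q i j := by
    rw [pairingTerm_eq hq.ne' hodd hi hj hij, ← mul_assoc, ← mul_pow, neg_one_mul, neg_neg,
      one_pow, one_mul]
    exact Complex.zero_lt_real.2 (zpow_pos hq _)
  have hnonneg {i j : ℕ} (hi : i ∈ Icc 1 n) (hj : j ∈ Icc 1 n) :
      0 ≤ s * pairingTerm n q i j := by
    rcases eq_or_ne i j with rfl | hij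
    · rw [pairingTerm_self q hi, mul_zero]
    · exact (hpos hi hj hij).le
  have h1 : 1 ∈ Icc 1 n := mem_Icc.2 ⟨le_rfl, by omega⟩
  have h2 : 2 ∈ Icc 1 n := mem_Icc.2 ⟨by omega, by omega⟩
  have hmain : 0 < s * inner ℂ (vVecQ n q) (wVecQ n q) := by
    rw [inner_vVecQ_wVecQ, mul_sum]
    refine sum_pos' (fun i hi => ?_) ⟨1, h1, ?_⟩
    · rw [mul_sum]
      exact sum_nonneg fun j hj => hnonneg hi hj
    · rw [mul_sum]
      exact sum_pos' (fun j hj => hnonneg h1 hj) ⟨2, h2, hpos h1 h2 (by omega)⟩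
  exact ⟨hmain, fun h => by simp [h] at hmain⟩

end
end

section
/- Let n ≥ 3 be an odd integer. The linear map T : V → S ⊗ S determined by T(u_i) = ẽ_i and T(u_{n+i}) = ẽ_{n+i} for 1 ≤ i ≤ n intertwines the Chevalley generators: T ∘ X_k^V = (X_k ⊗ id_S + id_S ⊗ X_k) ∘ T and T ∘ Y_k^V = (Y_k ⊗ id_S + id_S ⊗ Y_k) ∘ T for every k ∈ {1,…,n}. (This realizes the embedding of the vector representation V of so(2n,ℂ) into U₊ ⊗ U₊.) -/
open scoped TensorProduct Classical

noncomputable section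

/-- The spinor space `S`, with basis `(e_X)` indexed by subsets of `{1,…,n}`. -/
abbrev Sp (n : ℕ) : Type := SIdx n → ℂ

/-- The basis vector `e_X`. -/
def eB (n : ℕ) (X : SIdx n) : Sp n := Pi.single X 1

/-- `I_i(X) = I₁(X) + |{k ∈ X : k < i}| − (i−1)`. -/
def Ilow (n i : ℕ) (X : Finset ℕ) : ℤ :=
  I1 n X + ((X.filter (fun k => k < i)).card : ℤ) - ((i : ℤ) - 1)

def eraseIdx (n : ℕ) (X : SIdx n) (i : ℕ) : SIdx n :=
  ⟨(X : Finset ℕ).erase i,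
    Finset.mem_powerset.2 ((Finset.erase_subset _ _).trans (Finset.mem_powerset.1 X.2))⟩

def insertIdx (n : ℕ) (X : SIdx n) (i : ℕ) (h : i ∈ Finset.Icc 1 n) : SIdx n :=
  ⟨insert i (X : Finset ℕ),
    Finset.mem_powerset.2 (Finset.insert_subset h (Finset.mem_powerset.1 X.2))⟩

/-- The creation operator `a_i†`: `a_i† e_X = (−1)^{|{k ∈ X : k < i}|} e_{X∪{i}}` if `i ∉ X`,
and `a_i† e_X = 0` otherwise. -/
def adag (n i : ℕ) : Sp n →ₗ[ℂ] Sp n where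
  toFun f := fun X =>
    if i ∈ (X : Finset ℕ) then
      ((-1 : ℂ) ^ ((((X : Finset ℕ).erase i).filter (fun k => k < i)).card)) *
        f (eraseIdx n X i)
    else 0
  map_add' f g := by
    funext X; by_cases h : i ∈ (X : Finset ℕ) <;> simp [h] <;> ring
  map_smul' a f := by
    funext X; by_cases h : i ∈ (X : Finset ℕ) <;> simp [h] <;> ring

/-- The annihilation operator `a_i`: `a_i e_X = (−1)^{|{k ∈ X : k < i}|} e_{X∖{i}}` if `i ∈ X`,
and `a_i e_X = 0` otherwise. -/
def aop (n i : ℕ) : Sp n →ₗ[ℂ] Sp n where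
  toFun f := fun X =>
    if h : i ∈ Finset.Icc 1 n ∧ i ∉ (X : Finset ℕ) then
      ((-1 : ℂ) ^ (((insert i (X : Finset ℕ)).filter (fun k => k < i)).card)) *
        f (insertIdx n X i h.1)
    else 0
  map_add' f g := by
    funext X
    by_cases h : i ∈ Finset.Icc 1 n ∧ i ∉ (X : Finset ℕ)
    · simp only [dif_pos h, Pi.add_apply, mul_add]
    · simp only [dif_neg h, Pi.add_apply, add_zero]
  map_smul' a f := by
    funext X
    by_cases h : i ∈ Finset.Icc 1 n ∧ i ∉ (X : Finset ℕ)
    · simp only [dif_pos h, Pi.smul_apply, smul_eq_mul, RingHom.id_apply]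
      ring
    · simp only [dif_neg h, Pi.smul_apply, smul_eq_mul, RingHom.id_apply, mul_zero]

/-- The raising Chevalley generator: `X_i = −a_{i+1} a_i†` for `1 ≤ i ≤ n−1` and
`X_n = a_n† a_{n−1}†`. -/
def Xop (n i : ℕ) : Sp n →ₗ[ℂ] Sp n :=
  if i = n then (adag n n).comp (adag n (n - 1))
  else -((aop n (i + 1)).comp (adag n i))

/-- The lowering Chevalley generator: `Y_i = −a_i a_{i+1}†` for `1 ≤ i ≤ n−1` and
`Y_n = a_n a_{n−1}`. -/
def Yop (n i : ℕ) : Sp n →ₗ[ℂ] Sp n :=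
  if i = n then (aop n n).comp (aop n (n - 1))
  else -((aop n i).comp (adag n (i + 1)))

/-- `ẽ_i = Σ_{(X′,X″)∈Ω_i} σ_i(X′) e_{X′} ⊗ e_{X″}`, where `Ω_i` consists of pairs with
`X′ ∪ X″ = {1,…,n}`, `X′ ∩ X″ = {i}`, `|X′|` odd, and `σ_i(X) = (−1)^{I_i(X)}`. -/
def eTlow (n i : ℕ) : Sp n ⊗[ℂ] Sp n :=
  ∑ p ∈ Finset.univ.filter (fun p : SIdx n × SIdx n =>
      (p.1 : Finset ℕ) ∪ (p.2 : Finset ℕ) = Finset.Icc 1 n ∧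
      (p.1 : Finset ℕ) ∩ (p.2 : Finset ℕ) = {i} ∧ Odd (p.1 : Finset ℕ).card),
    ((-1 : ℂ) ^ (Ilow n i (p.1 : Finset ℕ))) • (eB n p.1 ⊗ₜ[ℂ] eB n p.2)

/-- `ẽ_{n+i} = (−1)^i Σ_{(X′,X″)∈Ω_{n+i}} σ_{n+i}(X′) e_{X′} ⊗ e_{X″}`, where `Ω_{n+i}`
consists of pairs of disjoint sets with `X′ ∪ X″ = {1,…,n} ∖ {i}` and `|X′|` odd, and
`σ_{n+i}(X) = (−1)^{I_{n+i}(X)}`. -/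
def eThigh (n i : ℕ) : Sp n ⊗[ℂ] Sp n :=
  ((-1 : ℂ) ^ i) •
    ∑ p ∈ Finset.univ.filter (fun p : SIdx n × SIdx n =>
        (p.1 : Finset ℕ) ∪ (p.2 : Finset ℕ) = (Finset.Icc 1 n) \ {i} ∧
        Disjoint (p.1 : Finset ℕ) (p.2 : Finset ℕ) ∧ Odd (p.1 : Finset ℕ).card),
      ((-1 : ℂ) ^ (Ihigh n i (p.1 : Finset ℕ))) • (eB n p.1 ⊗ₜ[ℂ] eB n p.2)

/-- The vector representation `V = ℂ^{2n}`; the coordinate `x` corresponds to the basis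
vector `u_{x+1}` (1-based indexing). -/
abbrev Vsp (n : ℕ) : Type := Fin (2 * n) → ℂ

/-- The basis vector `u_j` of `V` (1-based). -/
def uB (n j : ℕ) : Vsp n := fun x => if (x : ℕ) + 1 = j then 1 else 0

/-- The `l`-th coordinate functional on `V` (1-based). -/
def coordL (n l : ℕ) : Vsp n →ₗ[ℂ] ℂ where
  toFun f := ∑ x : Fin (2 * n), (if (x : ℕ) + 1 = l then 1 else 0) * f x
  map_add' f g := by simp [mul_add, Finset.sum_add_distrib]
  map_smul' a f := by
    simp only [Pi.smul_apply, smul_eq_mul, RingHom.id_apply, Finset.mul_sum]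
    exact Finset.sum_congr rfl fun x _ => by ring

/-- The matrix unit `E_{kl}`, acting by `E_{kl} u_m = δ_{lm} u_k`. -/
def matUnit (n k l : ℕ) : Vsp n →ₗ[ℂ] Vsp n := (coordL n l).smulRight (uB n k)

/-- The raising generator on `V`: `X_i = E_{i,i+1} − E_{n+i+1,n+i}` for `1 ≤ i ≤ n−1` and
`X_n = E_{n−1,2n} − E_{n,2n−1}`. -/
def XV (n i : ℕ) : Vsp n →ₗ[ℂ] Vsp n :=
  if i = n then matUnit n (n - 1) (2 * n) - matUnit n n (2 * n - 1)
  else matUnit n i (i + 1) - matUnit n (n + i + 1) (n + i)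

/-- The lowering generator on `V`: `Y_i = E_{i+1,i} − E_{n+i,n+i+1}` for `1 ≤ i ≤ n−1` and
`Y_n = E_{2n−1,n} − E_{2n,n−1}`. -/
def YV (n i : ℕ) : Vsp n →ₗ[ℂ] Vsp n :=
  if i = n then matUnit n (2 * n - 1) n - matUnit n (2 * n) (n - 1)
  else matUnit n (i + 1) i - matUnit n (n + i) (n + i + 1)

/-- The linear map `T : V → S ⊗ S` determined by `T(u_i) = ẽ_i` and `T(u_{n+i}) = ẽ_{n+i}`
for `1 ≤ i ≤ n`. -/
def Tmap (n : ℕ) : Vsp n →ₗ[ℂ] Sp n ⊗[ℂ] Sp n :=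
  ∑ i ∈ Finset.Icc 1 n,
    ((coordL n i).smulRight (eTlow n i) + (coordL n (n + i)).smulRight (eThigh n i))

/-!
Everything is checked coefficientwise in the basis `e_A ⊗ e_B` of `S ⊗ S`. On basis vectors the
generators act monomially: for `k < n`, `X_k` replaces `k + 1` by `k` and `Y_k` replaces `k` by
`k + 1`, both without sign, while `X_n` adds the pair `{n - 1, n}` with sign `-1` and `Y_n` removes
it. Hence the coefficient of `e_A ⊗ e_B` in `(L ⊗ 1 + 1 ⊗ L) ẽ_j` is a sum of two coefficients of
`ẽ_j`, one from each tensor factor. When `L^V u_j ≠ 0`, the move identifies the supports of the two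
terms with the two halves of the index set of `T (L^V u_j)`, split according to which factor
contains the moved element, and the signs agree. When `L^V u_j = 0`, the two terms are supported on
the same pairs and their exponents `I_j` differ by an odd amount, so they cancel. The oddness of `n`
enters only through the sign `(-1) ^ i` of `ẽ_{n+i}`, when `X_n` and `Y_n` exchange vectors `ẽ_i`
and `ẽ_{n+i}`.
-/

open Finset TensorProduct Module

section TensorBasis

variable {R ι : Type*} [CommSemiring R] [Fintype ι]

variable (R ι) in
abbrev tensorBasis : Basis (ι × ι) R ((ι → R) ⊗[R] (ι → R)) :=
  (Pi.basisFun R ι).tensorProduct (Pi.basisFun R ι)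

lemma tensorBasis_apply [DecidableEq ι] (p : ι × ι) :
    tensorBasis R ι p = Pi.single p.1 1 ⊗ₜ Pi.single p.2 1 := by
  simp [Basis.tensorProduct_apply']

lemma tensorBasis_repr_tmul (f g : ι → R) (p : ι × ι) :
    (tensorBasis R ι).repr (f ⊗ₜ g) p = f p.1 * g p.2 := by
  rw [Basis.tensorProduct_repr_tmul_apply, Pi.basisFun_repr, Pi.basisFun_repr, smul_eq_mul,
    mul_comm]

lemma tensorBasis_repr_sum_filter [DecidableEq ι] (P : ι × ι → Prop) [DecidablePred P]
    (c : ι × ι → R) (p : ι × ι) :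
    (tensorBasis R ι).repr (∑ q ∈ univ.filter P, c q • (Pi.single q.1 1 ⊗ₜ Pi.single q.2 1)) p
      = if P p then c p else 0 := by
  simp_rw [← tensorBasis_apply, sum_filter, ← ite_zero_smul, Basis.repr_sum_self]

variable {L : (ι → R) →ₗ[R] (ι → R)} {c : ι → R} {φ : ι → ι}

lemma tensorBasis_repr_rTensor (hL : ∀ f A, L f A = c A * f (φ A))
    (t : (ι → R) ⊗[R] (ι → R)) (p : ι × ι) :
    (tensorBasis R ι).repr (L.rTensor _ t) p = c p.1 * (tensorBasis R ι).repr t (φ p.1, p.2) := by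
  induction t using TensorProduct.induction_on with
  | zero => simp
  | tmul f g => simp only [LinearMap.rTensor_tmul, tensorBasis_repr_tmul, hL, mul_assoc]
  | add x y hx hy => simp only [map_add, Finsupp.add_apply, hx, hy, mul_add]

lemma tensorBasis_repr_lTensor (hL : ∀ f A, L f A = c A * f (φ A))
    (t : (ι → R) ⊗[R] (ι → R)) (p : ι × ι) :
    (tensorBasis R ι).repr (L.lTensor _ t) p = c p.2 * (tensorBasis R ι).repr t (p.1, φ p.2) := by
  induction t using TensorProduct.induction_on with
  | zero => simp
  | tmul f g => simp only [LinearMap.lTensor_tmul, tensorBasis_repr_tmul, hL]; ring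
  | add x y hx hy => simp only [map_add, Finsupp.add_apply, hx, hy, mul_add]

lemma tensorBasis_repr_rTensor_add_lTensor (hL : ∀ f A, L f A = c A * f (φ A))
    (t : (ι → R) ⊗[R] (ι → R)) (p : ι × ι) :
    (tensorBasis R ι).repr ((L.rTensor (ι → R) + L.lTensor (ι → R)) t) p =
      c p.1 * (tensorBasis R ι).repr t (φ p.1, p.2) +
        c p.2 * (tensorBasis R ι).repr t (p.1, φ p.2) := by
  rw [LinearMap.add_apply, map_add, Finsupp.add_apply, tensorBasis_repr_rTensor hL,
    tensorBasis_repr_lTensor hL]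

end TensorBasis

section IteSum

variable {M : Type*} {C₁ C₂ C : Prop} [Decidable C₁] [Decidable C₂] [Decidable C] {x₁ x₂ x : M}

lemma ite_add_ite_eq_ite [AddMonoid M] (h : C ↔ C₁ ∨ C₂) (hdisj : ¬(C₁ ∧ C₂))
    (h₁ : C₁ → x₁ = x) (h₂ : C₂ → x₂ = x) :
    (if C₁ then x₁ else 0) + (if C₂ then x₂ else 0) = if C then x else 0 := by
  by_cases hc₁ : C₁ <;> by_cases hc₂ : C₂ <;> simp_all

lemma ite_add_ite_eq_zero [AddGroup M] (h : C₁ ↔ C₂) (hx : C₁ → x₂ = -x₁) :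
    (if C₁ then x₁ else 0) + (if C₂ then x₂ else 0) = 0 := by
  by_cases hc₁ : C₁ <;> simp_all

end IteSum

section NegOnePow

variable {K : Type*} [DivisionRing K] {x y : ℤ}

lemma neg_one_zpow_eq_of_even_sub (h : Even (x - y)) : (-1 : K) ^ x = (-1) ^ y := by
  rw [neg_one_zpow_eq_ite, neg_one_zpow_eq_ite]
  simp only [Int.even_sub.1 h]

lemma neg_one_zpow_eq_neg_of_odd_sub (h : Odd (x - y)) : (-1 : K) ^ x = -(-1) ^ y := by
  have h' : Even (x - (y + 1)) := by
    rw [sub_add_eq_sub_sub]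
    exact h.sub_odd odd_one
  rw [neg_one_zpow_eq_of_even_sub h', zpow_add_one₀ (neg_ne_zero.2 one_ne_zero), mul_neg_one]

end NegOnePow

section Counting

variable {α : Type*} [LinearOrder α] {s : Finset α} {a b : α}

lemma card_filter_lt_insert (hb : b ∉ s) (m : α) :
    #((insert b s).filter (· < m)) = #(s.filter (· < m)) + if b < m then 1 else 0 := by
  rw [filter_insert]
  split_ifs
  · exact card_insert_of_notMem fun h => hb (mem_filter.1 h).1
  · rfl

lemma card_filter_lt_erase (ha : a ∈ s) (m : α) :
    #((s.erase a).filter (· < m)) + (if a < m then 1 else 0) = #(s.filter (· < m)) := by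
  rw [filter_erase]
  split_ifs with h
  · exact card_erase_add_one (mem_filter.2 ⟨ha, h⟩)
  · rw [add_zero, erase_eq_of_notMem]
    simp [h]

end Counting

lemma card_filter_lt_succ (s : Finset ℕ) (m : ℕ) :
    #(s.filter (· < m + 1)) = #(s.filter (· < m)) + if m ∈ s then 1 else 0 := by
  have h : s.filter (· < m + 1) =
      if m ∈ s then insert m (s.filter (· < m)) else s.filter (· < m) := by
    ext x
    split_ifs <;> simp only [mem_filter, mem_insert] <;> grind
  rw [h]
  split_ifs <;> simp

lemma card_insert_erase {α : Type*} [DecidableEq α] {s : Finset α} {a b : α} (ha : a ∈ s)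
    (hb : b ∉ s) : #((insert b s).erase a) = #s := by
  rw [card_erase_of_mem (mem_insert_of_mem ha), card_insert_of_notMem hb, Nat.add_sub_cancel]

section Operators

variable {n : ℕ}

lemma coe_subset_Icc (X : SIdx n) : (X : Finset ℕ) ⊆ Icc 1 n := mem_powerset.1 X.2

lemma coe_eraseIdx (X : SIdx n) (i : ℕ) : (eraseIdx n X i : Finset ℕ) = (X : Finset ℕ).erase i :=
  rfl

lemma coe_insertIdx (X : SIdx n) (i : ℕ) (h : i ∈ Icc 1 n) :
    (insertIdx n X i h : Finset ℕ) = insert i (X : Finset ℕ) := rfl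

lemma adag_apply (i : ℕ) (f : Sp n) (X : SIdx n) :
    adag n i f X = if i ∈ (X : Finset ℕ) then
      (-1 : ℂ) ^ #(((X : Finset ℕ).erase i).filter (· < i)) * f (eraseIdx n X i) else 0 := rfl

lemma aop_apply (i : ℕ) (f : Sp n) (X : SIdx n) :
    aop n i f X = if h : i ∈ Icc 1 n ∧ i ∉ (X : Finset ℕ) then
      (-1 : ℂ) ^ #((insert i (X : Finset ℕ)).filter (· < i)) * f (insertIdx n X i h.1) else 0 :=
  rfl

lemma neg_aop_comp_adag_apply {a b : ℕ} (hadj : a = b + 1 ∨ b = a + 1) (hb : b ∈ Icc 1 n)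
    (f : Sp n) (X : SIdx n) :
    (-(aop n b ∘ₗ adag n a)) f X = (if a ∈ (X : Finset ℕ) ∧ b ∉ (X : Finset ℕ) then 1 else 0) *
      f (eraseIdx n (insertIdx n X b hb) a) := by
  rw [LinearMap.neg_apply, LinearMap.comp_apply, Pi.neg_apply, aop_apply]
  by_cases hbX : b ∈ (X : Finset ℕ)
  · simp [hbX]
  rw [dif_pos ⟨hb, hbX⟩, adag_apply, coe_insertIdx]
  by_cases haX : a ∈ (X : Finset ℕ)
  swap
  · have hab : a ≠ b := by omega
    simp [hab, haX]
  have hodd : Odd (#((insert b (X : Finset ℕ)).filter (· < b)) +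
      #(((insert b (X : Finset ℕ)).erase a).filter (· < a))) := by
    have h₁ := card_filter_lt_insert hbX b
    have h₂ := card_filter_lt_erase (mem_insert_of_mem (s := (X : Finset ℕ)) (b := b) haX) a
    have h₃ := card_filter_lt_insert hbX a
    have h₄ := card_filter_lt_succ (X : Finset ℕ) a
    have h₅ := card_filter_lt_succ (X : Finset ℕ) b
    rw [Nat.odd_iff]
    rcases hadj with rfl | rfl <;> split_ifs at h₁ h₂ h₃ h₄ h₅ <;> omega
  rw [if_pos (mem_insert_of_mem haX), if_pos ⟨haX, hbX⟩, ← mul_assoc, ← pow_add,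
    hodd.neg_one_pow]
  ring

lemma Xop_self_apply (hn : 2 ≤ n) (f : Sp n) (X : SIdx n) :
    Xop n n f X = (if n ∈ (X : Finset ℕ) ∧ n - 1 ∈ (X : Finset ℕ) then -1 else 0) *
      f (eraseIdx n (eraseIdx n X n) (n - 1)) := by
  rw [Xop, if_pos rfl, LinearMap.comp_apply, adag_apply]
  by_cases hnX : n ∈ (X : Finset ℕ)
  swap
  · simp [hnX]
  rw [if_pos hnX, adag_apply, coe_eraseIdx]
  by_cases hn1X : n - 1 ∈ (X : Finset ℕ)
  swap
  · simp [hn1X]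
  have hlt : ∀ x ∈ (X : Finset ℕ).erase n, x < n := fun x hx =>
    lt_of_le_of_ne (mem_Icc.1 (coe_subset_Icc X (mem_of_mem_erase hx))).2 (ne_of_mem_erase hx)
  have hlt' : ∀ x ∈ ((X : Finset ℕ).erase n).erase (n - 1), x < n - 1 := fun x hx => by
    have := hlt x (mem_of_mem_erase hx)
    have := ne_of_mem_erase hx
    omega
  have hn1X' : n - 1 ∈ (X : Finset ℕ).erase n := mem_erase.2 ⟨by omega, hn1X⟩
  have hodd : Odd (#(((X : Finset ℕ).erase n).filter (· < n)) +
      #((((X : Finset ℕ).erase n).erase (n - 1)).filter (· < n - 1))) := by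
    rw [filter_true_of_mem hlt, filter_true_of_mem hlt', Nat.odd_iff]
    have := card_erase_add_one hnX
    have := card_erase_add_one hn1X'
    omega
  rw [if_pos hn1X', if_pos ⟨hnX, hn1X⟩, ← mul_assoc, ← pow_add, hodd.neg_one_pow]

lemma Yop_self_apply (hnU : n ∈ Icc 1 n) (hn1U : n - 1 ∈ Icc 1 n) (f : Sp n) (X : SIdx n) :
    Yop n n f X = (if n ∉ (X : Finset ℕ) ∧ n - 1 ∉ (X : Finset ℕ) then 1 else 0) *
      f (insertIdx n (insertIdx n X n hnU) (n - 1) hn1U) := by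
  have hn : 2 ≤ n := by simp only [mem_Icc] at hn1U; omega
  rw [Yop, if_pos rfl, LinearMap.comp_apply, aop_apply]
  by_cases hnX : n ∈ (X : Finset ℕ)
  · simp [hnX]
  rw [dif_pos ⟨hnU, hnX⟩, aop_apply, coe_insertIdx]
  by_cases hn1X : n - 1 ∈ (X : Finset ℕ)
  · simp [hn1X]
  have hn1X' : n - 1 ∉ insert n (X : Finset ℕ) := by simp [hn1X]; omega
  have hlt : ∀ x ∈ (X : Finset ℕ), x < n - 1 := fun x hx => by
    have := mem_Icc.1 (coe_subset_Icc X hx)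
    have : x ≠ n := fun h => hnX (h ▸ hx)
    have : x ≠ n - 1 := fun h => hn1X (h ▸ hx)
    omega
  have hA : (insert n (X : Finset ℕ)).filter (· < n) = X := by
    rw [filter_insert, if_neg (lt_irrefl n)]
    exact filter_true_of_mem fun x hx => by have := hlt x hx; omega
  have hB : (insert (n - 1) (insert n (X : Finset ℕ))).filter (· < n - 1) = X := by
    rw [filter_insert, if_neg (lt_irrefl _), filter_insert, if_neg (by omega)]
    exact filter_true_of_mem hlt
  rw [dif_pos ⟨hn1U, hn1X'⟩, if_pos ⟨hnX, hn1X⟩, hA, hB, ← mul_assoc, ← pow_add,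
    Even.neg_one_pow ⟨_, rfl⟩]

end Operators

section Signs

variable {n i a b : ℕ} {A : Finset ℕ}

lemma I1_insert (hb : b ∉ A) : I1 n (insert b A) = I1 n A + b - n := by
  simp only [I1, sum_insert hb, card_insert_of_notMem hb]
  push_cast
  ring

lemma Ilow_insert (hb : b ∉ A) :
    Ilow n i (insert b A) = Ilow n i A + b - n + if b < i then 1 else 0 := by
  simp only [Ilow, I1_insert hb, card_filter_lt_insert hb]
  split_ifs <;> push_cast <;> ring

lemma Ilow_erase (ha : a ∈ A) :
    Ilow n i (A.erase a) = Ilow n i A - a + n - if a < i then 1 else 0 := by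
  rw [← insert_erase ha, Ilow_insert (notMem_erase a A), erase_insert (notMem_erase a A)]
  ring

lemma Ilow_hop (ha : a ∈ A) (hb : b ∉ A) :
    Ilow n i ((insert b A).erase a) =
      Ilow n i A + b - a + (if b < i then 1 else 0) - (if a < i then 1 else 0) := by
  rw [Ilow_erase (mem_insert_of_mem ha), Ilow_insert hb]
  ring

lemma Ilow_succ (n i : ℕ) (A : Finset ℕ) :
    Ilow n (i + 1) A = Ilow n i A + (if i ∈ A then 1 else 0) - 1 := by
  simp only [Ilow, card_filter_lt_succ]
  split_ifs <;> push_cast <;> ring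

lemma Ilow_self (hn : 1 ≤ n) (A : Finset ℕ) :
    Ilow n n A = Ilow n (n - 1) A + (if n - 1 ∈ A then 1 else 0) - 1 := by
  simpa [Nat.sub_add_cancel hn] using Ilow_succ n (n - 1) A

lemma Ihigh_eq_Ilow (n i : ℕ) (A : Finset ℕ) : Ihigh n i A = Ilow n i A + i - n := by
  simp only [Ihigh, Ilow]
  ring

end Signs

-- The index sets `Ω_i` and `Ω_{n+i}` of `ẽ_i` and `ẽ_{n+i}` are cut out by these and `Odd #A`.
def IsLowPair (n i : ℕ) (A B : Finset ℕ) : Prop := A ∪ B = Icc 1 n ∧ A ∩ B = {i}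

def IsHighPair (n i : ℕ) (A B : Finset ℕ) : Prop := A ∪ B = Icc 1 n \ {i} ∧ Disjoint A B

lemma isLowPair_iff {n i : ℕ} {A B : Finset ℕ} :
    IsLowPair n i A B ↔ ∀ m, (m ∈ A ∨ m ∈ B ↔ m ∈ Icc 1 n) ∧ (m ∈ A ∧ m ∈ B ↔ m = i) := by
  simp only [IsLowPair, Finset.ext_iff, mem_union, mem_inter, mem_singleton, forall_and]

lemma isHighPair_iff {n i : ℕ} {A B : Finset ℕ} :
    IsHighPair n i A B ↔ ∀ m, (m ∈ A ∨ m ∈ B ↔ m ∈ Icc 1 n ∧ m ≠ i) ∧ ¬(m ∈ A ∧ m ∈ B) := by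
  simp only [IsHighPair, Finset.ext_iff, mem_union, mem_sdiff, mem_singleton, disjoint_left,
    forall_and, not_and]

def eTlowCoeff (n i : ℕ) (A B : Finset ℕ) : ℂ :=
  if IsLowPair n i A B ∧ Odd #A then (-1) ^ Ilow n i A else 0

-- The factor `(-1) ^ i` of `ẽ_{n+i}` is absorbed into the sign: `i + I_{n+i} = I_i + n + 2 (i - n)`.
def eThighCoeff (n i : ℕ) (A B : Finset ℕ) : ℂ :=
  if IsHighPair n i A B ∧ Odd #A then (-1) ^ (Ilow n i A + n) else 0

lemma tensorBasis_repr_eTlow (n i : ℕ) (p : SIdx n × SIdx n) :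
    (tensorBasis ℂ (SIdx n)).repr (eTlow n i) p = eTlowCoeff n i p.1 p.2 := by
  rw [eTlow]
  simp only [eB]
  rw [tensorBasis_repr_sum_filter]
  simp only [eTlowCoeff, IsLowPair, and_assoc]

lemma tensorBasis_repr_eThigh (n i : ℕ) (p : SIdx n × SIdx n) :
    (tensorBasis ℂ (SIdx n)).repr (eThigh n i) p = eThighCoeff n i p.1 p.2 := by
  rw [eThigh]
  simp only [eB]
  rw [map_smul, Finsupp.smul_apply, tensorBasis_repr_sum_filter]
  simp only [eThighCoeff, IsHighPair, and_assoc, smul_eq_mul, mul_ite, mul_zero]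
  congr 1
  rw [← zpow_natCast, ← zpow_add₀ (by norm_num), Ihigh_eq_Ilow]
  exact neg_one_zpow_eq_of_even_sub ⟨i - n, by ring⟩

-- Coefficients of `(H ⊗ 1 + 1 ⊗ H) ẽ_j` for `H = -a_b a_a†`, which on coefficients moves
-- `a ∈ A` to an adjacent `b ∉ A`: these are `X_k` (`a = k`) and `Y_k` (`a = k + 1`) for `k < n`.
section Hop

variable {n a b i : ℕ} {A B : Finset ℕ}

lemma eTlowCoeff_hop_self (hadj : a = b + 1 ∨ b = a + 1) (haU : a ∈ Icc 1 n)
    (hbU : b ∈ Icc 1 n) :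
    (if a ∈ A ∧ b ∉ A then 1 else 0) * eTlowCoeff n b ((insert b A).erase a) B +
      (if a ∈ B ∧ b ∉ B then 1 else 0) * eTlowCoeff n b A ((insert b B).erase a) =
    eTlowCoeff n a A B := by
  have hcard : a ∈ A → b ∉ A → #((insert b A).erase a) = #A := card_insert_erase
  have hsucc := Ilow_succ n (min a b) A
  simp only [eTlowCoeff, ite_zero_mul_ite_zero, one_mul]
  apply ite_add_ite_eq_ite
  -- a low `a`-pair has `b` in exactly one of `A`, `B`, and moving `a` to `b` there
  -- gives a low `b`-pair
  · simp only [isLowPair_iff, mem_erase, mem_insert]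
    grind
  · simp only [isLowPair_iff, mem_erase, mem_insert]
    grind
  · rintro ⟨⟨haA, hbA⟩, -⟩
    refine neg_one_zpow_eq_of_even_sub ?_
    rw [Ilow_hop haA hbA, Int.even_iff]
    rcases hadj with rfl | rfl <;> simp [haA, hbA] at hsucc ⊢ <;> omega
  · rintro ⟨-, hP, -⟩
    refine neg_one_zpow_eq_of_even_sub ?_
    have hab : a ∈ A ∧ b ∈ A := by
      simp only [isLowPair_iff, mem_erase, mem_insert] at hP
      grind
    rw [Int.even_iff]
    rcases hadj with rfl | rfl <;> simp [hab] at hsucc ⊢ <;> omega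

lemma eTlowCoeff_hop_of_ne (hadj : a = b + 1 ∨ b = a + 1) (haU : a ∈ Icc 1 n) (hib : i ≠ b) :
    (if a ∈ A ∧ b ∉ A then 1 else 0) * eTlowCoeff n i ((insert b A).erase a) B +
      (if a ∈ B ∧ b ∉ B then 1 else 0) * eTlowCoeff n i A ((insert b B).erase a) = 0 := by
  have hcard : a ∈ A → b ∉ A → #((insert b A).erase a) = #A := card_insert_erase
  simp only [eTlowCoeff, ite_zero_mul_ite_zero, one_mul]
  apply ite_add_ite_eq_zero
  -- both terms live on the pairs with `a ∈ A ∩ B`, `b ∉ A ∪ B`, and the move changes `I_i` by `±1`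
  · simp only [isLowPair_iff, mem_erase, mem_insert]
    grind
  · rintro ⟨⟨haA, hbA⟩, hP, -⟩
    have hia : i ≠ a := fun h => by simpa [h] using ((isLowPair_iff.1 hP i).2.2 rfl).1
    refine neg_one_zpow_eq_neg_of_odd_sub ?_
    rw [Ilow_hop haA hbA, Int.odd_iff]
    rcases hadj with rfl | rfl <;> split_ifs <;> omega

lemma eThighCoeff_hop_self (hadj : a = b + 1 ∨ b = a + 1) (haU : a ∈ Icc 1 n)
    (hbU : b ∈ Icc 1 n) :
    (if a ∈ A ∧ b ∉ A then 1 else 0) * eThighCoeff n a ((insert b A).erase a) B +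
      (if a ∈ B ∧ b ∉ B then 1 else 0) * eThighCoeff n a A ((insert b B).erase a) =
    -eThighCoeff n b A B := by
  have hcard : a ∈ A → b ∉ A → #((insert b A).erase a) = #A := card_insert_erase
  have hsucc := Ilow_succ n (min a b) A
  simp only [eThighCoeff, ite_zero_mul_ite_zero, one_mul, neg_ite, neg_zero]
  apply ite_add_ite_eq_ite
  · simp only [isHighPair_iff, mem_erase, mem_insert]
    grind
  · simp only [isHighPair_iff, mem_erase, mem_insert]
    grind
  · rintro ⟨⟨haA, hbA⟩, -⟩
    refine neg_one_zpow_eq_neg_of_odd_sub ?_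
    rw [Ilow_hop haA hbA, Int.odd_iff]
    rcases hadj with rfl | rfl <;> simp [haA, hbA] at hsucc ⊢ <;> omega
  · rintro ⟨-, hP, -⟩
    refine neg_one_zpow_eq_neg_of_odd_sub ?_
    have hab : a ∉ A ∧ b ∉ A := by
      simp only [isHighPair_iff, mem_erase, mem_insert] at hP
      grind
    rw [Int.odd_iff]
    rcases hadj with rfl | rfl <;> simp [hab] at hsucc ⊢ <;> omega

lemma eThighCoeff_hop_of_ne (hadj : a = b + 1 ∨ b = a + 1) (haU : a ∈ Icc 1 n) (hia : i ≠ a) :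
    (if a ∈ A ∧ b ∉ A then 1 else 0) * eThighCoeff n i ((insert b A).erase a) B +
      (if a ∈ B ∧ b ∉ B then 1 else 0) * eThighCoeff n i A ((insert b B).erase a) = 0 := by
  have hcard : a ∈ A → b ∉ A → #((insert b A).erase a) = #A := card_insert_erase
  simp only [eThighCoeff, ite_zero_mul_ite_zero, one_mul]
  apply ite_add_ite_eq_zero
  · simp only [isHighPair_iff, mem_erase, mem_insert]
    grind
  · rintro ⟨⟨haA, hbA⟩, hP, -⟩
    have hib : i ≠ b := fun h => by
      simp only [isHighPair_iff, mem_erase, mem_insert] at hP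
      grind
    refine neg_one_zpow_eq_neg_of_odd_sub ?_
    rw [Ilow_hop haA hbA, Int.odd_iff]
    rcases hadj with rfl | rfl <;> split_ifs <;> omega

end Hop

-- Coefficients of `(L ⊗ 1 + 1 ⊗ L) ẽ_j` for `L = X_n`, which on coefficients removes the pair
-- `{n - 1, n}` from `A`, and for `L = Y_n`, which adds it.
section Pair

variable {n i : ℕ} {A B : Finset ℕ}

lemma eTlowCoeff_erase_pair (hn : 2 ≤ n) :
    (if n ∈ A ∧ n - 1 ∈ A then -1 else 0) * eTlowCoeff n i ((A.erase n).erase (n - 1)) B +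
      (if n ∈ B ∧ n - 1 ∈ B then -1 else 0) * eTlowCoeff n i A ((B.erase n).erase (n - 1)) =
    0 := by
  have hcard := card_erase_add_one (s := A) (a := n)
  have hcard' := card_erase_add_one (s := A.erase n) (a := n - 1)
  simp only [eTlowCoeff, ite_zero_mul_ite_zero, neg_one_mul]
  apply ite_add_ite_eq_zero
  · simp only [isLowPair_iff, mem_erase, mem_Icc]
    grind
  · rintro ⟨⟨hnA, hn1A⟩, hP, -⟩
    have hi : i ≠ n ∧ i ≠ n - 1 := by
      have := isLowPair_iff.1 hP i
      simp only [mem_erase] at this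
      grind
    rw [neg_neg, neg_one_zpow_eq_neg_of_odd_sub (x := Ilow n i ((A.erase n).erase (n - 1)))
      (y := Ilow n i A)]
    rw [Ilow_erase (mem_erase.2 ⟨by omega, hn1A⟩), Ilow_erase hnA, Int.odd_iff]
    split_ifs <;> omega

lemma eThighCoeff_erase_pair_self (hn : 2 ≤ n) (hodd : Odd n) :
    (if n ∈ A ∧ n - 1 ∈ A then -1 else 0) * eThighCoeff n n ((A.erase n).erase (n - 1)) B +
      (if n ∈ B ∧ n - 1 ∈ B then -1 else 0) * eThighCoeff n n A ((B.erase n).erase (n - 1)) =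
    eTlowCoeff n (n - 1) A B := by
  have hcard := card_erase_add_one (s := A) (a := n)
  have hcard' := card_erase_add_one (s := A.erase n) (a := n - 1)
  have hself := Ilow_self (n := n) (by omega) A
  have hodd' : (n : ℤ) % 2 = 1 := by exact_mod_cast Nat.odd_iff.1 hodd
  simp only [eThighCoeff, eTlowCoeff, ite_zero_mul_ite_zero, neg_one_mul]
  apply ite_add_ite_eq_ite
  · simp only [isLowPair_iff, isHighPair_iff, mem_erase, mem_Icc]
    grind
  · simp only [isHighPair_iff, mem_erase, mem_Icc]
    grind
  · rintro ⟨⟨hnA, hn1A⟩, -⟩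
    rw [neg_one_zpow_eq_neg_of_odd_sub (y := Ilow n (n - 1) A), neg_neg]
    rw [Ilow_erase (mem_erase.2 ⟨by omega, hn1A⟩), Ilow_erase hnA, Int.odd_iff]
    rw [if_pos hn1A] at hself
    split_ifs <;> omega
  · rintro ⟨-, hP, -⟩
    have hA : n ∉ A ∧ n - 1 ∈ A := by
      simp only [isHighPair_iff, mem_erase, mem_Icc] at hP
      grind
    rw [neg_one_zpow_eq_neg_of_odd_sub (y := Ilow n (n - 1) A), neg_neg]
    rw [if_pos hA.2] at hself
    rw [Int.odd_iff]
    omega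

lemma eThighCoeff_erase_pair_pred (hn : 2 ≤ n) (hodd : Odd n) :
    (if n ∈ A ∧ n - 1 ∈ A then -1 else 0) * eThighCoeff n (n - 1) ((A.erase n).erase (n - 1)) B +
      (if n ∈ B ∧ n - 1 ∈ B then -1 else 0) * eThighCoeff n (n - 1) A ((B.erase n).erase (n - 1)) =
    -eTlowCoeff n n A B := by
  have hcard := card_erase_add_one (s := A) (a := n)
  have hcard' := card_erase_add_one (s := A.erase n) (a := n - 1)
  have hself := Ilow_self (n := n) (by omega) A
  have hodd' : (n : ℤ) % 2 = 1 := by exact_mod_cast Nat.odd_iff.1 hodd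
  simp only [eThighCoeff, eTlowCoeff, ite_zero_mul_ite_zero, neg_one_mul, neg_ite, neg_zero]
  apply ite_add_ite_eq_ite
  · simp only [isLowPair_iff, isHighPair_iff, mem_erase, mem_Icc]
    grind
  · simp only [isHighPair_iff, mem_erase, mem_Icc]
    grind
  · rintro ⟨⟨hnA, hn1A⟩, -⟩
    refine congrArg _ (neg_one_zpow_eq_of_even_sub ?_)
    rw [Ilow_erase (mem_erase.2 ⟨by omega, hn1A⟩), Ilow_erase hnA, Int.even_iff]
    rw [if_pos hn1A] at hself
    split_ifs <;> omega
  · rintro ⟨-, hP, -⟩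
    have hA : n ∈ A ∧ n - 1 ∉ A := by
      simp only [isHighPair_iff, mem_erase, mem_Icc] at hP
      grind
    refine congrArg _ (neg_one_zpow_eq_of_even_sub ?_)
    rw [if_neg hA.2] at hself
    rw [Int.even_iff]
    omega

lemma eThighCoeff_erase_pair_of_ne (hn : 2 ≤ n) (hin : i ≠ n) (hin1 : i ≠ n - 1) :
    (if n ∈ A ∧ n - 1 ∈ A then -1 else 0) * eThighCoeff n i ((A.erase n).erase (n - 1)) B +
      (if n ∈ B ∧ n - 1 ∈ B then -1 else 0) * eThighCoeff n i A ((B.erase n).erase (n - 1)) =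
    0 := by
  have hcard := card_erase_add_one (s := A) (a := n)
  have hcard' := card_erase_add_one (s := A.erase n) (a := n - 1)
  simp only [eThighCoeff, ite_zero_mul_ite_zero, neg_one_mul]
  apply ite_add_ite_eq_zero
  · simp only [isHighPair_iff, mem_erase, mem_Icc]
    grind
  · rintro ⟨⟨hnA, hn1A⟩, -⟩
    rw [neg_neg, neg_one_zpow_eq_neg_of_odd_sub (x := Ilow n i ((A.erase n).erase (n - 1)) + n)
      (y := Ilow n i A + n)]
    rw [Ilow_erase (mem_erase.2 ⟨by omega, hn1A⟩), Ilow_erase hnA, Int.odd_iff]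
    split_ifs <;> omega

lemma card_insert_pair (hn : 2 ≤ n) (hnA : n ∉ A) (hn1A : n - 1 ∉ A) :
    #(insert (n - 1) (insert n A)) = #A + 2 := by
  rw [card_insert_of_notMem (by simp [hn1A]; omega), card_insert_of_notMem hnA]

lemma eTlowCoeff_insert_pair_self (hn : 2 ≤ n) (hodd : Odd n) :
    (if n ∉ A ∧ n - 1 ∉ A then 1 else 0) * eTlowCoeff n n (insert (n - 1) (insert n A)) B +
      (if n ∉ B ∧ n - 1 ∉ B then 1 else 0) * eTlowCoeff n n A (insert (n - 1) (insert n B)) =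
    eThighCoeff n (n - 1) A B := by
  have hcard : n ∉ A → n - 1 ∉ A → #(insert (n - 1) (insert n A)) = #A + 2 := card_insert_pair hn
  have hself := Ilow_self (n := n) (by omega) A
  have hodd' : (n : ℤ) % 2 = 1 := by exact_mod_cast Nat.odd_iff.1 hodd
  simp only [eThighCoeff, eTlowCoeff, ite_zero_mul_ite_zero, one_mul]
  apply ite_add_ite_eq_ite
  · simp only [isLowPair_iff, isHighPair_iff, mem_insert, mem_Icc]
    grind
  · simp only [isLowPair_iff, mem_insert, mem_Icc]
    grind
  · rintro ⟨⟨hnA, hn1A⟩, -⟩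
    refine neg_one_zpow_eq_of_even_sub ?_
    rw [Ilow_insert (by simp [hn1A]; omega), Ilow_insert hnA, Int.even_iff]
    rw [if_neg hn1A] at hself
    split_ifs <;> omega
  · rintro ⟨-, hP, -⟩
    have hA : n ∈ A ∧ n - 1 ∉ A := by
      simp only [isLowPair_iff, mem_insert, mem_Icc] at hP
      grind
    refine neg_one_zpow_eq_of_even_sub ?_
    rw [if_neg hA.2] at hself
    rw [Int.even_iff]
    omega

lemma eTlowCoeff_insert_pair_pred (hn : 2 ≤ n) (hodd : Odd n) :
    (if n ∉ A ∧ n - 1 ∉ A then 1 else 0) * eTlowCoeff n (n - 1) (insert (n - 1) (insert n A)) B +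
      (if n ∉ B ∧ n - 1 ∉ B then 1 else 0) * eTlowCoeff n (n - 1) A (insert (n - 1) (insert n B)) =
    -eThighCoeff n n A B := by
  have hcard : n ∉ A → n - 1 ∉ A → #(insert (n - 1) (insert n A)) = #A + 2 := card_insert_pair hn
  have hself := Ilow_self (n := n) (by omega) A
  have hodd' : (n : ℤ) % 2 = 1 := by exact_mod_cast Nat.odd_iff.1 hodd
  simp only [eThighCoeff, eTlowCoeff, ite_zero_mul_ite_zero, one_mul, neg_ite, neg_zero]
  apply ite_add_ite_eq_ite
  · simp only [isLowPair_iff, isHighPair_iff, mem_insert, mem_Icc]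
    grind
  · simp only [isLowPair_iff, mem_insert, mem_Icc]
    grind
  · rintro ⟨⟨hnA, hn1A⟩, -⟩
    refine neg_one_zpow_eq_neg_of_odd_sub ?_
    rw [Ilow_insert (by simp [hn1A]; omega), Ilow_insert hnA, Int.odd_iff]
    rw [if_neg hn1A] at hself
    split_ifs <;> omega
  · rintro ⟨-, hP, -⟩
    have hA : n ∉ A ∧ n - 1 ∈ A := by
      simp only [isLowPair_iff, mem_insert, mem_Icc] at hP
      grind
    refine neg_one_zpow_eq_neg_of_odd_sub ?_
    rw [if_pos hA.2] at hself
    rw [Int.odd_iff]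
    omega

lemma eTlowCoeff_insert_pair_of_ne (hn : 2 ≤ n) (hin : i ≠ n) (hin1 : i ≠ n - 1) :
    (if n ∉ A ∧ n - 1 ∉ A then 1 else 0) * eTlowCoeff n i (insert (n - 1) (insert n A)) B +
      (if n ∉ B ∧ n - 1 ∉ B then 1 else 0) * eTlowCoeff n i A (insert (n - 1) (insert n B)) =
    0 := by
  have hcard : n ∉ A → n - 1 ∉ A → #(insert (n - 1) (insert n A)) = #A + 2 := card_insert_pair hn
  simp only [eTlowCoeff, ite_zero_mul_ite_zero, one_mul]
  apply ite_add_ite_eq_zero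
  · simp only [isLowPair_iff, mem_insert, mem_Icc]
    grind
  · rintro ⟨⟨hnA, hn1A⟩, -⟩
    refine neg_one_zpow_eq_neg_of_odd_sub ?_
    rw [Ilow_insert (by simp [hn1A]; omega), Ilow_insert hnA, Int.odd_iff]
    split_ifs <;> omega

lemma eThighCoeff_insert_pair (hn : 2 ≤ n) :
    (if n ∉ A ∧ n - 1 ∉ A then 1 else 0) * eThighCoeff n i (insert (n - 1) (insert n A)) B +
      (if n ∉ B ∧ n - 1 ∉ B then 1 else 0) * eThighCoeff n i A (insert (n - 1) (insert n B)) =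
    0 := by
  have hcard : n ∉ A → n - 1 ∉ A → #(insert (n - 1) (insert n A)) = #A + 2 := card_insert_pair hn
  simp only [eThighCoeff, ite_zero_mul_ite_zero, one_mul]
  apply ite_add_ite_eq_zero
  · simp only [isHighPair_iff, mem_insert, mem_Icc]
    grind
  · rintro ⟨⟨hnA, hn1A⟩, hP, -⟩
    have hi : i ≠ n ∧ i ≠ n - 1 := by
      have := isHighPair_iff.1 hP i
      simp only [mem_insert] at this
      grind
    refine neg_one_zpow_eq_neg_of_odd_sub ?_
    rw [Ilow_insert (by simp [hn1A]; omega), Ilow_insert hnA, Int.odd_iff]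
    split_ifs <;> omega

end Pair

section TensorIdentities

variable {n a b : ℕ}

lemma hop_eTlow (hadj : a = b + 1 ∨ b = a + 1) (haU : a ∈ Icc 1 n) (hbU : b ∈ Icc 1 n) (i : ℕ) :
    ((-(aop n b ∘ₗ adag n a)).rTensor (Sp n) + (-(aop n b ∘ₗ adag n a)).lTensor (Sp n))
      (eTlow n i) = if i = b then eTlow n a else 0 := by
  refine (tensorBasis ℂ (SIdx n)).ext_elem fun p => ?_
  rw [tensorBasis_repr_rTensor_add_lTensor (neg_aop_comp_adag_apply hadj hbU)]
  simp only [tensorBasis_repr_eTlow, coe_eraseIdx, coe_insertIdx]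
  rcases eq_or_ne i b with rfl | hib
  · rw [if_pos rfl, eTlowCoeff_hop_self hadj haU hbU, tensorBasis_repr_eTlow]
  · rw [if_neg hib, eTlowCoeff_hop_of_ne hadj haU hib, map_zero, Finsupp.coe_zero,
      Pi.zero_apply]

lemma hop_eThigh (hadj : a = b + 1 ∨ b = a + 1) (haU : a ∈ Icc 1 n) (hbU : b ∈ Icc 1 n)
    (i : ℕ) :
    ((-(aop n b ∘ₗ adag n a)).rTensor (Sp n) + (-(aop n b ∘ₗ adag n a)).lTensor (Sp n))
      (eThigh n i) = if i = a then -eThigh n b else 0 := by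
  refine (tensorBasis ℂ (SIdx n)).ext_elem fun p => ?_
  rw [tensorBasis_repr_rTensor_add_lTensor (neg_aop_comp_adag_apply hadj hbU)]
  simp only [tensorBasis_repr_eThigh, coe_eraseIdx, coe_insertIdx]
  rcases eq_or_ne i a with rfl | hia
  · rw [if_pos rfl, eThighCoeff_hop_self hadj haU hbU, map_neg, Finsupp.neg_apply,
      tensorBasis_repr_eThigh]
  · rw [if_neg hia, eThighCoeff_hop_of_ne hadj haU hia, map_zero, Finsupp.coe_zero,
      Pi.zero_apply]

lemma Xop_self_eTlow (hn : 2 ≤ n) (i : ℕ) :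
    ((Xop n n).rTensor (Sp n) + (Xop n n).lTensor (Sp n)) (eTlow n i) = 0 := by
  refine (tensorBasis ℂ (SIdx n)).ext_elem fun p => ?_
  rw [tensorBasis_repr_rTensor_add_lTensor (Xop_self_apply hn)]
  simp only [tensorBasis_repr_eTlow, coe_eraseIdx, map_zero, Finsupp.coe_zero, Pi.zero_apply]
  exact eTlowCoeff_erase_pair hn

lemma Xop_self_eThigh (hn : 2 ≤ n) (hodd : Odd n) (i : ℕ) :
    ((Xop n n).rTensor (Sp n) + (Xop n n).lTensor (Sp n)) (eThigh n i) =
      if i = n then eTlow n (n - 1) else if i = n - 1 then -eTlow n n else 0 := by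
  refine (tensorBasis ℂ (SIdx n)).ext_elem fun p => ?_
  rw [tensorBasis_repr_rTensor_add_lTensor (Xop_self_apply hn)]
  simp only [tensorBasis_repr_eThigh, coe_eraseIdx]
  rcases eq_or_ne i n with rfl | hin
  · rw [if_pos rfl, eThighCoeff_erase_pair_self hn hodd, tensorBasis_repr_eTlow]
  rcases eq_or_ne i (n - 1) with rfl | hin1
  · rw [if_neg hin, if_pos rfl, eThighCoeff_erase_pair_pred hn hodd, map_neg, Finsupp.neg_apply,
      tensorBasis_repr_eTlow]
  · rw [if_neg hin, if_neg hin1, eThighCoeff_erase_pair_of_ne hn hin hin1, map_zero,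
      Finsupp.coe_zero, Pi.zero_apply]

lemma Yop_self_eTlow (hnU : n ∈ Icc 1 n) (hn1U : n - 1 ∈ Icc 1 n) (hodd : Odd n) (i : ℕ) :
    ((Yop n n).rTensor (Sp n) + (Yop n n).lTensor (Sp n)) (eTlow n i) =
      if i = n then eThigh n (n - 1) else if i = n - 1 then -eThigh n n else 0 := by
  have hn : 2 ≤ n := by simp only [mem_Icc] at hn1U; omega
  refine (tensorBasis ℂ (SIdx n)).ext_elem fun p => ?_
  rw [tensorBasis_repr_rTensor_add_lTensor (Yop_self_apply hnU hn1U)]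
  simp only [tensorBasis_repr_eTlow, coe_insertIdx]
  rcases eq_or_ne i n with rfl | hin
  · rw [if_pos rfl, eTlowCoeff_insert_pair_self hn hodd, tensorBasis_repr_eThigh]
  rcases eq_or_ne i (n - 1) with rfl | hin1
  · rw [if_neg hin, if_pos rfl, eTlowCoeff_insert_pair_pred hn hodd, map_neg, Finsupp.neg_apply,
      tensorBasis_repr_eThigh]
  · rw [if_neg hin, if_neg hin1, eTlowCoeff_insert_pair_of_ne hn hin hin1, map_zero,
      Finsupp.coe_zero, Pi.zero_apply]

lemma Yop_self_eThigh (hnU : n ∈ Icc 1 n) (hn1U : n - 1 ∈ Icc 1 n) (i : ℕ) :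
    ((Yop n n).rTensor (Sp n) + (Yop n n).lTensor (Sp n)) (eThigh n i) = 0 := by
  have hn : 2 ≤ n := by simp only [mem_Icc] at hn1U; omega
  refine (tensorBasis ℂ (SIdx n)).ext_elem fun p => ?_
  rw [tensorBasis_repr_rTensor_add_lTensor (Yop_self_apply hnU hn1U)]
  simp only [tensorBasis_repr_eThigh, coe_insertIdx, map_zero, Finsupp.coe_zero, Pi.zero_apply]
  exact eThighCoeff_insert_pair hn

end TensorIdentities

section VectorRep

variable {n : ℕ}

lemma uB_succ (x : Fin (2 * n)) : uB n (x + 1) = Pi.single x 1 := by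
  ext y
  simp [uB, Pi.single_apply, Fin.ext_iff]

lemma coordL_uB {l j : ℕ} (hj : j ∈ Icc 1 (2 * n)) :
    coordL n l (uB n j) = if l = j then 1 else 0 := by
  obtain ⟨x, rfl⟩ : ∃ x : Fin (2 * n), (x : ℕ) + 1 = j :=
    ⟨⟨j - 1, by simp only [mem_Icc] at hj; omega⟩, by simp only [mem_Icc] at hj; simp; omega⟩
  simp only [coordL, LinearMap.coe_mk, AddHom.coe_mk, uB_succ]
  rw [Fintype.sum_eq_single x fun y hy => by simp [hy]]
  simp [eq_comm]

lemma matUnit_uB (a : ℕ) {l j : ℕ} (hj : j ∈ Icc 1 (2 * n)) :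
    matUnit n a l (uB n j) = if l = j then uB n a else 0 := by
  rw [matUnit, LinearMap.smulRight_apply, coordL_uB hj, ite_smul, one_smul, zero_smul]

lemma mem_Icc_two_mul {i : ℕ} (hi : i ∈ Icc 1 n) :
    i ∈ Icc 1 (2 * n) ∧ n + i ∈ Icc 1 (2 * n) := by
  simp only [mem_Icc] at hi ⊢
  omega

lemma Tmap_uB_low {j : ℕ} (hj : j ∈ Icc 1 n) : Tmap n (uB n j) = eTlow n j := by
  simp only [Tmap, LinearMap.sum_apply, LinearMap.add_apply, LinearMap.smulRight_apply,
    coordL_uB (mem_Icc_two_mul hj).1, ite_smul, one_smul, zero_smul]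
  rw [sum_add_distrib, sum_ite_eq', if_pos hj, sum_eq_zero, add_zero]
  intro i hi
  simp only [mem_Icc] at hi hj
  rw [if_neg (by omega)]

lemma Tmap_uB_high {j : ℕ} (hj : j ∈ Icc 1 n) : Tmap n (uB n (n + j)) = eThigh n j := by
  simp only [Tmap, LinearMap.sum_apply, LinearMap.add_apply, LinearMap.smulRight_apply,
    coordL_uB (mem_Icc_two_mul hj).2, ite_smul, one_smul, zero_smul, add_right_inj]
  rw [sum_add_distrib, sum_eq_zero, zero_add, sum_ite_eq', if_pos hj]
  intro i hi
  simp only [mem_Icc] at hi hj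
  rw [if_neg (by omega)]

lemma linearMap_ext_uB {M : Type*} [AddCommMonoid M] [Module ℂ M] {f g : Vsp n →ₗ[ℂ] M}
    (h : ∀ i ∈ Icc 1 n, f (uB n i) = g (uB n i) ∧ f (uB n (n + i)) = g (uB n (n + i))) :
    f = g := by
  refine (Pi.basisFun ℂ (Fin (2 * n))).ext fun x => ?_
  rw [Pi.basisFun_apply, ← uB_succ]
  by_cases hx : (x : ℕ) + 1 ≤ n
  · exact (h _ (mem_Icc.2 ⟨by omega, hx⟩)).1
  · have := (h ((x : ℕ) + 1 - n) (mem_Icc.2 ⟨by omega, by omega⟩)).2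
    rwa [Nat.add_sub_cancel' (by omega)] at this

lemma Tmap_comp_hop {a b : ℕ} (hadj : a = b + 1 ∨ b = a + 1) (haU : a ∈ Icc 1 n)
    (hbU : b ∈ Icc 1 n) :
    (Tmap n).comp (matUnit n a b - matUnit n (n + b) (n + a)) =
      ((-(aop n b ∘ₗ adag n a)).rTensor (Sp n) + (-(aop n b ∘ₗ adag n a)).lTensor (Sp n)).comp
        (Tmap n) := by
  refine linearMap_ext_uB fun i hi => ?_
  have hi' := mem_Icc_two_mul hi
  simp only [LinearMap.comp_apply, LinearMap.sub_apply, matUnit_uB _ hi'.1, matUnit_uB _ hi'.2,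
    Tmap_uB_low hi, Tmap_uB_high hi, hop_eTlow hadj haU hbU, hop_eThigh hadj haU hbU]
  have := mem_Icc.1 hi
  have := mem_Icc.1 haU
  have := mem_Icc.1 hbU
  constructor
  · rw [if_neg (show n + a ≠ i by omega), sub_zero]
    split_ifs <;> first | omega | simp only [map_zero, Tmap_uB_low haU]
  · rw [if_neg (show b ≠ n + i by omega), zero_sub]
    split_ifs <;> first | omega | simp only [map_neg, map_zero, neg_zero, Tmap_uB_high hbU]

lemma Tmap_comp_XV_self (hn : 2 ≤ n) (hodd : Odd n) :
    (Tmap n).comp (XV n n) =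
      ((Xop n n).rTensor (Sp n) + (Xop n n).lTensor (Sp n)).comp (Tmap n) := by
  have hnU : n ∈ Icc 1 n := mem_Icc.2 ⟨by omega, le_rfl⟩
  have hn1U : n - 1 ∈ Icc 1 n := mem_Icc.2 ⟨by omega, by omega⟩
  refine linearMap_ext_uB fun i hi => ?_
  have hi' := mem_Icc_two_mul hi
  simp only [LinearMap.comp_apply, XV, ite_true, LinearMap.sub_apply, matUnit_uB _ hi'.1,
    matUnit_uB _ hi'.2, Tmap_uB_low hi, Tmap_uB_high hi, Xop_self_eTlow hn,
    Xop_self_eThigh hn hodd]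
  simp only [mem_Icc] at hi
  constructor
  · rw [if_neg (show 2 * n ≠ i by omega), if_neg (show 2 * n - 1 ≠ i by omega), sub_zero,
      map_zero]
  · split_ifs <;> first | omega |
      simp only [map_neg, map_zero, sub_zero, zero_sub, Tmap_uB_low hnU, Tmap_uB_low hn1U]

lemma Tmap_comp_YV_self (hn : 2 ≤ n) (hodd : Odd n) :
    (Tmap n).comp (YV n n) =
      ((Yop n n).rTensor (Sp n) + (Yop n n).lTensor (Sp n)).comp (Tmap n) := by
  have hnU : n ∈ Icc 1 n := mem_Icc.2 ⟨by omega, le_rfl⟩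
  have hn1U : n - 1 ∈ Icc 1 n := mem_Icc.2 ⟨by omega, by omega⟩
  have hT : Tmap n (uB n (2 * n)) = eThigh n n := by
    rw [congrArg (uB n) (two_mul n)]
    exact Tmap_uB_high hnU
  have hT' : Tmap n (uB n (2 * n - 1)) = eThigh n (n - 1) := by
    rw [congrArg (uB n) (show 2 * n - 1 = n + (n - 1) by omega)]
    exact Tmap_uB_high hn1U
  refine linearMap_ext_uB fun i hi => ?_
  have hi' := mem_Icc_two_mul hi
  simp only [LinearMap.comp_apply, YV, ite_true, LinearMap.sub_apply, matUnit_uB _ hi'.1,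
    matUnit_uB _ hi'.2, Tmap_uB_low hi, Tmap_uB_high hi, Yop_self_eTlow hnU hn1U hodd,
    Yop_self_eThigh hnU hn1U]
  simp only [mem_Icc] at hi
  constructor
  · split_ifs <;> first | omega | simp only [map_neg, map_zero, sub_zero, zero_sub, hT, hT']
  · rw [if_neg (show n ≠ n + i by omega), if_neg (show n - 1 ≠ n + i by omega), sub_zero,
      map_zero]

end VectorRep

/-- The map `T : V → S ⊗ S` with `T(u_i) = ẽ_i`, `T(u_{n+i}) = ẽ_{n+i}` intertwines the
Chevalley generators: `T ∘ X_k^V = (X_k ⊗ id + id ⊗ X_k) ∘ T` and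
`T ∘ Y_k^V = (Y_k ⊗ id + id ⊗ Y_k) ∘ T` for every `k ∈ {1,…,n}`. -/
theorem stmt10 (n : ℕ) (hn : 3 ≤ n) (hodd : Odd n) (k : ℕ) (hk : k ∈ Finset.Icc 1 n) :
    (Tmap n).comp (XV n k)
        = (LinearMap.rTensor (Sp n) (Xop n k) + LinearMap.lTensor (Sp n) (Xop n k)).comp
            (Tmap n) ∧
    (Tmap n).comp (YV n k)
        = (LinearMap.rTensor (Sp n) (Yop n k) + LinearMap.lTensor (Sp n) (Yop n k)).comp
            (Tmap n) := by
  obtain ⟨hk1, hkn⟩ := Finset.mem_Icc.1 hk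
  rcases hkn.lt_or_eq with hkn | rfl
  · have hkU : k ∈ Icc 1 n := mem_Icc.2 ⟨hk1, hkn.le⟩
    have hk1U : k + 1 ∈ Icc 1 n := mem_Icc.2 ⟨by omega, hkn⟩
    simp only [XV, YV, Xop, Yop, if_neg hkn.ne]
    exact ⟨Tmap_comp_hop (Or.inr rfl) hkU hk1U, Tmap_comp_hop (Or.inl rfl) hk1U hkU⟩
  · exact ⟨Tmap_comp_XV_self (by omega) hodd, Tmap_comp_YV_self (by omega) hodd⟩
end
end
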